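/- arXiv:2405.05268 — 7 statements merged into one kernel-verified Lean document; each statement's English description precedes it below -/
import Mathlib

section
/- For every integer k ≥ 1 and every positive integer n, 2^(2k) · S_{2k}(n) = Σ_{m=1}^{k} R(k,m) · C(2n+m+1, 2m+1). -/
/-- `S k n = 1^k + 2^k + ⋯ + n^k`, the sum of the `k`-th powers of the first `n`
positive integers. -/
def S (k n : ℕ) : ℕ := ∑ i ∈ Finset.Icc 1 n, i ^ k

/-- `R k m = ∑_{j=0}^m (-1)^j C(2m, j) (m-j)^{2k}`, the sequence A304330. -/
def R (k m : ℕ) : ℤ :=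
  ∑ j ∈ Finset.range (m + 1),
    (-1 : ℤ) ^ j * ((2 * m).choose j : ℤ) * (((m - j) ^ (2 * k) : ℕ) : ℤ)

/-!
With `c_m(x) = C(x+m, 2m) + C(x+m-1, 2m) = 2x²(x² - 1²)⋯(x² - (m-1)²) / (2m)!`, one has
`x² c_m = m² c_m + (2m+1)(2m+2) c_{m+1}`, matching the recursion
`R(k+1, m) = m² R(k, m) + 2m(2m-1) R(k, m-1)`. As `2 R(k, m)` is the `2m`-th central difference
of `x^{2k}` at `0`, it vanishes for `m > k`, and induction on `k` gives
`x^{2k} = ∑_{m=1}^k R(k, m) c_m(x)`. Putting `x = 2i` and summing over `i ≤ n`, Pascal's rule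
telescopes `∑_{i=1}^n c_m(2i)` to `C(2n+m+1, 2m+1)`.
-/

open Finset Polynomial
open scoped Nat

theorem sum_range_neg_one_pow_mul_choose_mul_sub_pow_eq_zero {A : Type*} [CommRing A]
    {N p : ℕ} (h : p < N) (a : A) :
    ∑ j ∈ range (N + 1), (-1) ^ j * (N.choose j : A) * (a - j) ^ p = 0 := by
  have hΔ := congrFun (fwdDiff_iter_pow_eq_zero_of_lt (R := A) h) (-a)
  rw [fwdDiff_iter_eq_sum_shift, Pi.zero_apply] at hΔ
  rw [← mul_eq_zero_of_right ((-1) ^ (N + p)) hΔ, mul_sum]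
  refine sum_congr rfl fun j hj => ?_
  have hsign : (-1 : A) ^ j = (-1) ^ (N + p) * (-1) ^ (N - j) * (-1) ^ p := by
    rw [← pow_add, ← pow_add, show N + p + (N - j) + p = j + 2 * (N - j + p) by grind, pow_add,
      pow_mul, neg_one_sq, one_pow, mul_one]
  rw [hsign, zsmul_eq_mul, nsmul_one, show -a + j = -(a - j) by ring, neg_pow (a - j)]
  push_cast
  ring

theorem R_eq_sum_sub_pow (k m : ℕ) :
    R k m =
      ∑ j ∈ range (m + 1), (-1) ^ j * ((2 * m).choose j : ℤ) * ((m : ℤ) - j) ^ (2 * k) := by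
  refine sum_congr rfl fun j hj => ?_
  rw [Nat.cast_pow, Nat.cast_sub (by grind)]

theorem R_zero_right {k : ℕ} (hk : k ≠ 0) : R k 0 = 0 := by
  simp [R, hk]

theorem two_mul_R_eq_sum {k : ℕ} (hk : k ≠ 0) (m : ℕ) :
    2 * R k m = ∑ j ∈ range (2 * m + 1),
      (-1) ^ j * ((2 * m).choose j : ℤ) * ((m : ℤ) - j) ^ (2 * k) := by
  rw [R_eq_sum_sub_pow]
  set f : ℕ → ℤ := fun j => (-1) ^ j * ((2 * m).choose j : ℤ) * ((m : ℤ) - j) ^ (2 * k)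
  have hmid : f m = 0 := by simp [f, hk]
  have hsymm : ∀ j < m, f (m + 1 + j) = f (m - 1 - j) := by
    intro j hj
    have hchoose : (2 * m).choose (m + 1 + j) = (2 * m).choose (m - 1 - j) := by
      rw [← Nat.choose_symm (by omega : m + 1 + j ≤ 2 * m),
        show 2 * m - (m + 1 + j) = m - 1 - j by omega]
    have hsign : (-1 : ℤ) ^ (m + 1 + j) = (-1) ^ (m - 1 - j) := by
      rw [show m + 1 + j = (m - 1 - j) + 2 * (j + 1) by omega, pow_add, pow_mul, neg_one_sq,
        one_pow, mul_one]
    simp only [f, hchoose, hsign]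
    rw [show ((m - 1 - j : ℕ) : ℤ) = m - 1 - j by omega, ← (even_two_mul k).neg_pow]
    push_cast
    ring
  rw [show 2 * m + 1 = (m + 1) + m by ring, sum_range_add f (m + 1) m, sum_range_succ f m, hmid,
    sum_congr rfl fun j hj => hsymm j (mem_range.mp hj), sum_range_reflect f m]
  ring

theorem R_eq_zero_of_lt {k m : ℕ} (hk : k ≠ 0) (hkm : k < m) : R k m = 0 := by
  have h := two_mul_R_eq_sum hk m
  rw [sum_range_neg_one_pow_mul_choose_mul_sub_pow_eq_zero (by omega)] at h
  omega

theorem Nat.add_one_mul_sub_mul_choose_add_two (N j : ℕ) :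
    (j + 1) * (N + 1 - j) * (N + 2).choose (j + 1) = (N + 2) * (N + 1) * N.choose j := by
  have h₁ := Nat.add_one_mul_choose_eq (N + 1) j
  have h₂ := Nat.choose_mul_succ_eq N j
  calc (j + 1) * (N + 1 - j) * (N + 2).choose (j + 1)
      = (N + 2).choose (j + 1) * (j + 1) * (N + 1 - j) := by ring
    _ = (N + 2) * ((N + 1).choose j * (N + 1 - j)) := by rw [← h₁]; ring
    _ = (N + 2) * (N + 1) * N.choose j := by rw [← h₂]; ring

theorem R_succ_succ (k m : ℕ) :
    R (k + 1) (m + 1) = (m + 1) ^ 2 * R k (m + 1) + (2 * m + 1) * (2 * m + 2) * R k m := by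
  rw [← sub_eq_iff_eq_add', R_eq_sum_sub_pow, R_eq_sum_sub_pow, R_eq_sum_sub_pow, mul_sum,
    mul_sum, ← sum_sub_distrib, sum_range_succ', add_eq_left.mpr (by push_cast; ring)]
  refine sum_congr rfl fun i hi => ?_
  have hc := congrArg (Nat.cast : ℕ → ℤ) (Nat.add_one_mul_sub_mul_choose_add_two (2 * m) i)
  push_cast [show i ≤ 2 * m + 1 by grind] at hc
  rw [show 2 * (m + 1) = 2 * m + 2 by ring]
  push_cast
  linear_combination ((-1) ^ i * ((m : ℤ) - i) ^ (2 * k)) * hc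

theorem descPochhammer_succ_eval_add_one {A : Type*} [CommRing A] (n : ℕ) (y : A) :
    (descPochhammer A (n + 1)).eval (y + 1) = (y + 1) * (descPochhammer A n).eval y := by
  simp [descPochhammer_succ_left]

-- `c_m(x)` above
def centralChoose (m x : ℕ) : ℕ := (x + m).choose (2 * m) + (x + m - 1).choose (2 * m)

theorem factorial_mul_centralChoose_succ (m x : ℕ) :
    ((2 * m + 2)! : ℤ) * centralChoose (m + 1) x =
      2 * x * (descPochhammer ℤ (2 * m + 1)).eval ((x + m : ℕ) : ℤ) := by
  have hD (n : ℕ) : ((2 * m + 2)! : ℤ) * n.choose (2 * m + 2) =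
      (descPochhammer ℤ (2 * m + 2)).eval (n : ℤ) := by
    rw [descPochhammer_eval_eq_descFactorial, Nat.descFactorial_eq_factorial_mul_choose]
    push_cast
    rfl
  rw [centralChoose, show x + (m + 1) - 1 = x + m by omega, show x + (m + 1) = x + m + 1 by ring,
    show 2 * (m + 1) = 2 * m + 2 by ring, Nat.cast_add, mul_add, hD, hD, Nat.cast_succ (x + m),
    descPochhammer_succ_eval_add_one, descPochhammer_succ_eval (2 * m + 1)]
  push_cast
  ring

theorem centralChoose_one (x : ℕ) : centralChoose 1 x = x ^ 2 := by
  have h := factorial_mul_centralChoose_succ 0 x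
  norm_num at h
  zify
  linarith

theorem sq_mul_centralChoose (m x : ℕ) :
    (x ^ 2 : ℤ) * centralChoose (m + 1) x =
      (m + 1) ^ 2 * centralChoose (m + 1) x +
        (2 * m + 3) * (2 * m + 4) * centralChoose (m + 2) x := by
  have h₁ := factorial_mul_centralChoose_succ m x
  have h₂ := factorial_mul_centralChoose_succ (m + 1) x
  rw [show 2 * (m + 1) + 2 = 2 * m + 2 + 1 + 1 by ring, Nat.factorial_succ, Nat.factorial_succ,
    show 2 * (m + 1) + 1 = 2 * m + 2 + 1 by ring, show x + (m + 1) = x + m + 1 by ring,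
    Nat.cast_succ (x + m), descPochhammer_succ_eval_add_one,
    descPochhammer_succ_eval (2 * m + 1)] at h₂
  apply mul_left_cancel₀ (show ((2 * m + 2)! : ℤ) ≠ 0 by positivity)
  push_cast at h₁ h₂ ⊢
  linear_combination (x ^ 2 - (m + 1) ^ 2 : ℤ) * h₁ - h₂

theorem R_one_one : R 1 1 = 1 := by decide

theorem pow_eq_sum_R_mul_centralChoose {k : ℕ} (hk : 1 ≤ k) (x : ℕ) :
    (x : ℤ) ^ (2 * k) = ∑ m ∈ Icc 1 k, R k m * centralChoose m x := by
  rw [← Ico_add_one_right_eq_Icc, sum_Ico_eq_sum_range, add_tsub_cancel_right]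
  simp only [add_comm 1]
  induction k, hk using Nat.le_induction with
  | base => simp [R_one_one, centralChoose_one]
  | succ k hk ih =>
    have hR₀ := R_zero_right (k := k) (by omega)
    have hR₁ := R_eq_zero_of_lt (k := k) (m := k + 1) (by omega) (by omega)
    have hstep (i : ℕ) : R k (i + 1) * centralChoose (i + 1) x * (x : ℤ) ^ 2 =
        (i + 1) ^ 2 * R k (i + 1) * centralChoose (i + 1) x +
          (2 * (i + 1) + 1) * (2 * (i + 1) + 2) * R k (i + 1) * centralChoose (i + 1 + 1) x := by
      linear_combination R k (i + 1) * sq_mul_centralChoose i x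
    calc (x : ℤ) ^ (2 * (k + 1))
        = ∑ i ∈ range k, R k (i + 1) * centralChoose (i + 1) x * (x : ℤ) ^ 2 := by
          rw [mul_add, mul_one, pow_add, ih, sum_mul]
      _ = ∑ i ∈ range (k + 1), (i + 1) ^ 2 * R k (i + 1) * centralChoose (i + 1) x +
            ∑ i ∈ range (k + 1),
              (2 * i + 1) * (2 * i + 2) * R k i * centralChoose (i + 1) x := by
          rw [sum_range_succ _ k, sum_range_succ' _ k, hR₀, hR₁,
            sum_congr rfl fun i _ => hstep i, sum_add_distrib]
          push_cast
          ring
      _ = ∑ i ∈ range (k + 1), R (k + 1) (i + 1) * centralChoose (i + 1) x := by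
          rw [← sum_add_distrib]
          refine sum_congr rfl fun i _ => ?_
          rw [R_succ_succ]
          ring

theorem sum_Icc_centralChoose_two_mul {m : ℕ} (hm : 1 ≤ m) (n : ℕ) :
    ∑ i ∈ Icc 1 n, centralChoose m (2 * i) = (2 * n + m + 1).choose (2 * m + 1) := by
  induction n with
  | zero => exact (Nat.choose_eq_zero_of_lt (by omega)).symm
  | succ n ih =>
    rw [sum_Icc_succ_top (by omega), ih, centralChoose,
      show 2 * (n + 1) + m + 1 = 2 * n + m + 1 + 1 + 1 by ring,
      show 2 * (n + 1) + m = 2 * n + m + 1 + 1 by ring, Nat.add_sub_cancel,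
      Nat.choose_succ_succ' (2 * n + m + 1 + 1), Nat.choose_succ_succ' (2 * n + m + 1)]
    ring

theorem stmt_0_general (k n : ℕ) (hk : 1 ≤ k) :
    (2 ^ (2 * k) * S (2 * k) n : ℤ) =
      ∑ m ∈ Finset.Icc 1 k, R k m * ((2 * n + m + 1).choose (2 * m + 1) : ℤ) := by
  have hS : (2 ^ (2 * k) * S (2 * k) n : ℤ) =
      ∑ i ∈ Icc 1 n, ((2 * i : ℕ) : ℤ) ^ (2 * k) := by
    simp [S, mul_sum, mul_pow]
  rw [hS, sum_congr rfl fun i _ => pow_eq_sum_R_mul_centralChoose hk (2 * i), sum_comm]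
  refine sum_congr rfl fun m hm => ?_
  rw [← mul_sum, ← Nat.cast_sum, sum_Icc_centralChoose_two_mul (mem_Icc.mp hm).1]

theorem stmt_0 (k n : ℕ) (hk : 1 ≤ k) (hn : 1 ≤ n) :
    (2 ^ (2 * k) * S (2 * k) n : ℤ) =
      ∑ m ∈ Finset.Icc 1 k, R k m * ((2 * n + m + 1).choose (2 * m + 1) : ℤ) :=
  stmt_0_general k n hk
end

section
/- Fix an integer k ≥ 1 and rational numbers a_1, a_2, …, a_k. Then the identity S_{2k}(n) / (2n+1) = a_1·C(n+1, 2) + a_2·C(n+2, 4) + ⋯ + a_k·C(n+k, 2k) holds for all positive integers n if and only if the identity S_{2k-1}(n) = (3/1)·a_1·C(n+1, 2) + (5/2)·a_2·C(n+2, 4) + ⋯ + ((2k+1)/k)·a_k·C(n+k, 2k) holds for all positive integers n. -/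
lemma S_succ (k n : ℕ) : S k (n+1) = S k n + (n+1)^k := by
  unfold S
  rw [Finset.sum_Icc_succ_top (by omega)]

lemma pascal_aux (m n : ℕ) (hm : 1 ≤ m) :
    (n+1+m).choose (2*m) = (n+m).choose (2*m-1) + (n+m).choose (2*m) := by
  rw [show n+1+m = (n+m)+1 by ring, show 2*m = (2*m-1)+1 by omega, Nat.choose_succ_succ]
  simp

lemma key_nat (m n : ℕ) (hm : 1 ≤ m) :
    m * ((n + 1 + m).choose (2*m) + (n + m).choose (2*m))
      = (n+1) * (n + m).choose (2*m - 1) := by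
  rcases lt_or_ge (n+1) m with h | h
  · rw [Nat.choose_eq_zero_of_lt (by omega), Nat.choose_eq_zero_of_lt (by omega),
      Nat.choose_eq_zero_of_lt (by omega)]
    simp
  · have key := Nat.choose_succ_right_eq (n+m) (2*m-1)
    rw [show 2*m-1+1 = 2*m by omega] at key
    rw [pascal_aux m n hm]
    zify [show 2*m-1 ≤ n+m by omega, show 1 ≤ 2*m by omega] at key ⊢
    linear_combination key

lemma key_rat (m n : ℕ) (hm : 1 ≤ m) :
    (2*(n:ℚ)+3) * ((n+1+m).choose (2*m) : ℚ) - (2*(n:ℚ)+1) * ((n+m).choose (2*m) : ℚ)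
      = ((n:ℚ)+1) * ((2*(m:ℚ)+1)/(m:ℚ)) * (((n+1+m).choose (2*m) : ℚ) - ((n+m).choose (2*m) : ℚ)) := by
  have h1 := key_nat m n hm
  rw [pascal_aux m n hm] at h1 ⊢
  qify at h1
  have hm' : (m:ℚ) ≠ 0 := Nat.cast_ne_zero.mpr (by omega)
  push_cast at h1 ⊢
  field_simp
  linear_combination h1

lemma telescope (f g : ℕ → ℚ) (h0 : f 0 = g 0) :
    (∀ n, f n = g n) ↔ ∀ n, f (n+1) - f n = g (n+1) - g n := by
  constructor
  · intro h n; rw [h, h]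
  · intro h n
    induction n with
    | zero => exact h0
    | succ n ih => have := h n; linarith

theorem stmt_1 (k : ℕ) (hk : 1 ≤ k) (a : ℕ → ℚ) :
    (∀ n : ℕ, 1 ≤ n →
        (S (2 * k) n : ℚ) / (2 * n + 1) =
          ∑ m ∈ Finset.Icc 1 k, a m * ((n + m).choose (2 * m) : ℚ)) ↔
      (∀ n : ℕ, 1 ≤ n →
        (S (2 * k - 1) n : ℚ) =
          ∑ m ∈ Finset.Icc 1 k,
            ((2 * m + 1 : ℚ) / (m : ℚ)) * a m * ((n + m).choose (2 * m) : ℚ)) := by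
  set RA : ℕ → ℚ := fun n => ∑ m ∈ Finset.Icc 1 k, a m * ((n + m).choose (2 * m) : ℚ)
    with hRAdef
  set RB : ℕ → ℚ := fun n => ∑ m ∈ Finset.Icc 1 k,
      ((2 * m + 1 : ℚ) / (m : ℚ)) * a m * ((n + m).choose (2 * m) : ℚ) with hRBdef
  have hchoose0 : ∀ m ∈ Finset.Icc 1 k, ((0 + m).choose (2 * m) : ℚ) = 0 := by
    intro m hm
    have h1 : 1 ≤ m := (Finset.mem_Icc.mp hm).1
    rw [Nat.choose_eq_zero_of_lt (by omega)]
    simp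
  have hRA0 : RA 0 = 0 := Finset.sum_eq_zero fun m hm => by rw [hchoose0 m hm, mul_zero]
  have hRB0 : RB 0 = 0 := Finset.sum_eq_zero fun m hm => by rw [hchoose0 m hm, mul_zero]
  have hS0 : ∀ j, S j 0 = 0 := fun j => by simp [S]
  -- key summed identity
  have hsum : ∀ n : ℕ, (2*(n:ℚ)+3) * RA (n+1) - (2*(n:ℚ)+1) * RA n
      = ((n:ℚ)+1) * (RB (n+1) - RB n) := by
    intro n
    simp only [hRAdef, hRBdef, Finset.mul_sum, ← Finset.sum_sub_distrib]
    apply Finset.sum_congr rfl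
    intro m hm
    have h1 : 1 ≤ m := (Finset.mem_Icc.mp hm).1
    have hkr := key_rat m n h1
    push_cast at hkr ⊢
    linear_combination a m * hkr
  -- step A
  have hA : (∀ n : ℕ, 1 ≤ n → (S (2 * k) n : ℚ) / (2 * n + 1) = RA n)
      ↔ (∀ n : ℕ, (S (2 * k) n : ℚ) = (2*(n:ℚ)+1) * RA n) := by
    constructor
    · intro h n
      rcases Nat.eq_zero_or_pos n with rfl | hn
      · simp [hS0, hRA0]
      · have h2 := h n hn
        rw [div_eq_iff (by positivity)] at h2
        rw [h2]; ring
    · intro h n hn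
      rw [h n, mul_comm, mul_div_assoc, div_self (by positivity), mul_one]
  have hB : (∀ n : ℕ, 1 ≤ n → (S (2 * k - 1) n : ℚ) = RB n)
      ↔ (∀ n : ℕ, (S (2 * k - 1) n : ℚ) = RB n) := by
    constructor
    · intro h n
      rcases Nat.eq_zero_or_pos n with rfl | hn
      · simp [hS0, hRB0]
      · exact h n hn
    · intro h n _; exact h n
  rw [hA, hB]
  rw [telescope (fun n => ((S (2*k) n : ℚ))) (fun n => (2*(n:ℚ)+1) * RA n)
    (by simp [hS0, hRA0])]
  rw [telescope (fun n => ((S (2*k-1) n : ℚ))) RB (by simp [hS0, hRB0])]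
  apply forall_congr'
  intro n
  beta_reduce
  have e1 : ((S (2*k) (n+1) : ℚ)) - (S (2*k) n : ℚ) = ((n:ℚ)+1)^(2*k) := by
    rw [S_succ]; push_cast; ring
  have e2 : (2*((n:ℚ)+1)+1) * RA (n+1) - (2*(n:ℚ)+1) * RA n
      = ((n:ℚ)+1) * (RB (n+1) - RB n) := by
    linear_combination hsum n
  have e3 : ((S (2*k-1) (n+1) : ℚ)) - (S (2*k-1) n : ℚ) = ((n:ℚ)+1)^(2*k-1) := by
    rw [S_succ]; push_cast; ring
  have hne : ((n:ℚ)+1) ≠ 0 := by positivity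
  have epow : ((n:ℚ)+1)^(2*k) = ((n:ℚ)+1) * ((n:ℚ)+1)^(2*k-1) := by
    rw [← pow_succ']
    congr 1
    omega
  rw [e1, e3]
  push_cast
  rw [e2, epow]
  exact mul_right_inj' hne
end

section
/- For every fixed positive integer k and every integer n ≥ 1, Σ_{i=1}^{n} (2i) · C(2i+k-1, 2k-1) = k · C(2n+k+1, 2k+1). -/
lemma key_aux (k m : ℕ) (hk : 1 ≤ k) :
    2 * k * (Nat.choose m (2*k) + Nat.choose (m+1) (2*k)) =
      (m + 1 + (m - (2*k-1))) * Nat.choose m (2*k-1) := by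
  have h1 : (m+1) * Nat.choose m (2*k-1) = Nat.choose (m+1) (2*k-1+1) * (2*k-1+1) :=
    Nat.add_one_mul_choose_eq m (2*k-1)
  have h2 : Nat.choose m (2*k-1+1) * (2*k-1+1) = Nat.choose m (2*k-1) * (m - (2*k-1)) :=
    Nat.choose_succ_right_eq m (2*k-1)
  have e : 2*k-1+1 = 2*k := by omega
  rw [e] at h1 h2
  nlinarith [h1, h2]

theorem stmt_4 (k n : ℕ) (hk : 1 ≤ k) (hn : 1 ≤ n) :
    ∑ i ∈ Finset.Icc 1 n, 2 * i * ((2 * i + k - 1).choose (2 * k - 1)) =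
      k * ((2 * n + k + 1).choose (2 * k + 1)) := by
  clear hn
  induction n with
  | zero =>
    simp [Nat.choose_eq_zero_of_lt (by omega : k + 1 < 2*k+1)]
  | succ n ih =>
    rw [Finset.sum_Icc_succ_top (by omega : 1 ≤ n+1), ih]
    set m := 2*n+k+1 with hm
    have e1 : 2*(n+1)+k-1 = m := by omega
    have e2 : 2*(n+1)+k+1 = m+2 := by omega
    rw [e1, e2]
    have pas : Nat.choose (m+2) (2*k+1) =
        Nat.choose m (2*k+1) + Nat.choose m (2*k) + Nat.choose (m+1) (2*k) := by
      rw [show m+2 = (m+1)+1 from rfl, Nat.choose_succ_succ (m+1) (2*k),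
        Nat.choose_succ_succ m (2*k)]
      ring
    rw [pas]
    have goal2 : k * Nat.choose m (2*k) + k * Nat.choose (m+1) (2*k)
        = 2 * (n+1) * Nat.choose m (2*k-1) := by
      by_cases hle : 2*k - 1 ≤ m
      · have hc : m + 1 + (m - (2*k-1)) = 4 * (n+1) := by omega
        have hkey := key_aux k m hk
        rw [hc] at hkey
        have h2 : 2 * (k * Nat.choose m (2*k) + k * Nat.choose (m+1) (2*k))
            = 2 * (2 * (n+1) * Nat.choose m (2*k-1)) := by nlinarith [hkey]
        omega
      · have z1 : Nat.choose m (2*k-1) = 0 := Nat.choose_eq_zero_of_lt (by omega)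
        have z2 : Nat.choose m (2*k) = 0 := Nat.choose_eq_zero_of_lt (by omega)
        have z3 : Nat.choose (m+1) (2*k) = 0 := Nat.choose_eq_zero_of_lt (by omega)
        simp [z1, z2, z3]
    nlinarith [goal2]
end

section
/- For every fixed positive integer k and every integer n ≥ 1, (2k+1) · Σ_{i=1}^{n} i · C(i+k-1, 2k-1) = k · (2n+1) · C(n+k, 2k). -/
theorem stmt_5 (k n : ℕ) (hk : 1 ≤ k) (hn : 1 ≤ n) :
    (2 * k + 1) * ∑ i ∈ Finset.Icc 1 n, i * ((i + k - 1).choose (2 * k - 1)) =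
      k * (2 * n + 1) * ((n + k).choose (2 * k)) := by
  induction n with
  | zero => omega
  | succ m ih =>
    rcases Nat.eq_zero_or_pos m with rfl | hm
    · -- base case n = 1
      simp only [Finset.Icc_self, Finset.sum_singleton]
      rcases Nat.eq_or_lt_of_le hk with rfl | hk2
      · decide
      · have h1 : k < 2 * k - 1 := by omega
        have h2 : k + 1 < 2 * k := by omega
        rw [show 1 + k - 1 = k by omega, Nat.choose_eq_zero_of_lt h1,
          show 1 + k = k + 1 by omega, Nat.choose_eq_zero_of_lt h2]
        ring
    · have ih := ih hm
      rw [Finset.sum_Icc_succ_top (by omega : 1 ≤ m + 1)]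
      set S := ∑ i ∈ Finset.Icc 1 m, i * ((i + k - 1).choose (2 * k - 1)) with hS
      have he : m + 1 + k - 1 = m + k := by omega
      rw [he]
      set a := (m + k).choose (2 * k - 1) with ha
      set b := (m + k).choose (2 * k) with hb
      have pascal : (m + 1 + k).choose (2 * k) = a + b := by
        rw [show m + 1 + k = (m + k) + 1 by ring, show 2 * k = (2 * k - 1) + 1 by omega,
          Nat.choose_succ_succ' (m + k) (2 * k - 1)]
        rw [ha, hb, show 2 * k - 1 + 1 = 2 * k by omega]
      rw [pascal]
      rcases Nat.lt_or_ge (m + k) (2 * k - 1) with h | h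
      · have ha0 : a = 0 := Nat.choose_eq_zero_of_lt h
        have hb0 : b = 0 := Nat.choose_eq_zero_of_lt (by omega)
        simp only [ha0, hb0, Nat.mul_zero, Nat.add_zero, Nat.zero_add] at ih ⊢
        linarith
      · have key : b * (2 * k) = a * (m + 1 - k) := by
          rw [ha, hb, show 2 * k = (2 * k - 1) + 1 by omega,
            Nat.choose_succ_right_eq (m + k) (2 * k - 1)]
          congr 1
          omega
        have hmk : k ≤ m + 1 := by omega
        -- goal: (2k+1)*(S + (m+1)*a) = k*(2(m+1)+1)*(a+b)
        have expand : (2 * k + 1) * (S + (m + 1) * a) =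
            (2 * k + 1) * S + (2 * k + 1) * (m + 1) * a := by ring
        rw [expand, ih]
        obtain ⟨t, ht⟩ : ∃ t, m + 1 = k + t := ⟨m + 1 - k, by omega⟩
        have h1 : (2 * k + 1) * (m + 1) * a = k * (2 * (m + 1) + 1) * a + b * (2 * k) := by
          rw [key, show m + 1 - k = t by omega, ht]
          ring
        calc k * (2 * m + 1) * b + (2 * k + 1) * (m + 1) * a
            = k * (2 * m + 1) * b + (k * (2 * (m + 1) + 1) * a + b * (2 * k)) := by rw [h1]
          _ = k * (2 * (m + 1) + 1) * (a + b) := by ring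
end

section
/- For every integer k ≥ 1 and every positive integer n, Ω_{2k}(n) = Σ_{m=1}^{k} R(k,m) · C(n+m, 2m). -/
/-- `Ω k n = n^k − (n-1)^k + ⋯ + (-1)^{n-1} 1^k`, the alternating sum of the `k`-th
powers of the first `n` positive integers. -/
def Om (k n : ℕ) : ℤ := ∑ i ∈ Finset.Icc 1 n, (-1 : ℤ) ^ (n - i) * ((i ^ k : ℕ) : ℤ)

/-- the full (symmetric) alternating sum `F k m = ∑_{j=0}^{2m} (-1)^j C(2m,j) (m-j)^{2k}`,
with the subtraction in `ℤ`. -/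
def FF (k m : ℕ) : ℤ :=
  ∑ j ∈ Finset.range (2 * m + 1),
    (-1 : ℤ) ^ j * ((2 * m).choose j : ℤ) * ((m : ℤ) - j) ^ (2 * k)

/-- `g m n = C(n+m, 2m) + C(n+m-1, 2m)`. -/
def gg (m n : ℕ) : ℤ := ((n + m).choose (2 * m) : ℤ) + ((n + m - 1).choose (2 * m) : ℤ)

lemma ca (n m : ℕ) (hm : 1 ≤ m) :
    (2 * (m : ℤ) + 2) * (2 * (m : ℤ) + 1) * ((n + m + 1).choose (2 * m + 2) : ℤ)
      = ((n : ℤ) - m) * ((n : ℤ) + m + 1) * ((n + m).choose (2 * m) : ℤ) := by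
  rcases le_or_gt m n with h | h
  · have h1 := Nat.add_one_mul_choose_eq (n + m) (2 * m + 1)
    have h2 := Nat.choose_succ_right_eq (n + m) (2 * m)
    have h3 : n + m - 2 * m = n - m := by omega
    rw [h3] at h2
    zify [h] at h1 h2
    linear_combination (-(2 * (m : ℤ) + 1)) * h1 + ((n : ℤ) + m + 1) * h2
  · have e1 : (n + m + 1).choose (2 * m + 2) = 0 := Nat.choose_eq_zero_of_lt (by omega)
    have e2 : (n + m).choose (2 * m) = 0 := Nat.choose_eq_zero_of_lt (by omega)
    rw [e1, e2]; ring

lemma cb (n m : ℕ) (hm : 1 ≤ m) :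
    (2 * (m : ℤ) + 2) * (2 * (m : ℤ) + 1) * ((n + m).choose (2 * m + 2) : ℤ)
      = ((n : ℤ) - m - 1) * ((n : ℤ) + m) * ((n + m - 1).choose (2 * m) : ℤ) := by
  rcases le_or_gt (m + 1) n with h | h
  · have h1 := Nat.add_one_mul_choose_eq (n + m - 1) (2 * m + 1)
    rw [show n + m - 1 + 1 = n + m by omega] at h1
    have h2 := Nat.choose_succ_right_eq (n + m - 1) (2 * m)
    have h3 : n + m - 1 - 2 * m = n - m - 1 := by omega
    rw [h3] at h2
    zify [show m ≤ n by omega, show 1 ≤ n - m by omega] at h1 h2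
    linear_combination (-(2 * (m : ℤ) + 1)) * h1 + ((n : ℤ) + m) * h2
  · have e1 : (n + m).choose (2 * m + 2) = 0 := Nat.choose_eq_zero_of_lt (by omega)
    have e2 : (n + m - 1).choose (2 * m) = 0 := Nat.choose_eq_zero_of_lt (by omega)
    rw [e1, e2]; ring

lemma cc (n m : ℕ) (hm : 1 ≤ m) :
    ((n : ℤ) - m) * ((n + m).choose (2 * m) : ℤ)
      = ((n : ℤ) + m) * ((n + m - 1).choose (2 * m) : ℤ) := by
  rcases le_or_gt m n with h | h
  · have h1 := Nat.add_one_mul_choose_eq (n + m - 1) (2 * m)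
    rw [show n + m - 1 + 1 = n + m by omega] at h1
    have h2 := Nat.choose_succ_right_eq (n + m) (2 * m)
    have h3 : n + m - 2 * m = n - m := by omega
    rw [h3] at h2
    zify [h] at h1 h2
    linear_combination (-1 : ℤ) * h1 + (-1 : ℤ) * h2
  · have e1 : (n + m).choose (2 * m) = 0 := Nat.choose_eq_zero_of_lt (by omega)
    have e2 : (n + m - 1).choose (2 * m) = 0 := Nat.choose_eq_zero_of_lt (by omega)
    rw [e1, e2]; ring

lemma grec (n m : ℕ) (hm : 1 ≤ m) :
    (n : ℤ) ^ 2 * gg m n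
      = (2 * (m : ℤ) + 2) * (2 * (m : ℤ) + 1) * gg (m + 1) n + (m : ℤ) ^ 2 * gg m n := by
  have e1 : n + (m + 1) = n + m + 1 := by omega
  have e2 : 2 * (m + 1) = 2 * m + 2 := by omega
  have e3 : n + m + 1 - 1 = n + m := by omega
  simp only [gg, e1, e2, e3]
  linear_combination (-1 : ℤ) * ca n m hm + (-1 : ℤ) * cb n m hm + (-1 : ℤ) * cc n m hm

lemma key (M j : ℕ) :
    (j + 1) * (2 * M + 1 - j) * (2 * M + 2).choose (j + 1)
      = (2 * M + 2) * (2 * M + 1) * (2 * M).choose j := by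
  have h1 := Nat.add_one_mul_choose_eq (2 * M + 1) j
  have h2 := Nat.choose_succ_right_eq (2 * M + 1) j
  have h3 := Nat.add_one_mul_choose_eq (2 * M) j
  calc (j + 1) * (2 * M + 1 - j) * (2 * M + 2).choose (j + 1)
      = (2 * M + 1 - j) * ((2 * M + 1 + 1).choose (j + 1) * (j + 1)) := by ring
    _ = (2 * M + 1 - j) * ((2 * M + 1 + 1) * (2 * M + 1).choose j) := by rw [← h1]
    _ = (2 * M + 2) * ((2 * M + 1).choose j * (2 * M + 1 - j)) := by ring
    _ = (2 * M + 2) * ((2 * M + 1).choose (j + 1) * (j + 1)) := by rw [← h2]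
    _ = (2 * M + 2) * ((2 * M + 1) * (2 * M).choose j) := by rw [← h3]
    _ = (2 * M + 2) * (2 * M + 1) * (2 * M).choose j := by ring

lemma FrecM (k M : ℕ) :
    FF (k + 1) (M + 1) = ((M : ℤ) + 1) ^ 2 * FF k (M + 1)
      + (2 * (M : ℤ) + 2) * (2 * (M : ℤ) + 1) * FF k M := by
  have hrange : 2 * (M + 1) + 1 = 2 * M + 2 + 1 := by omega
  have hsplit : FF (k + 1) (M + 1) = ((M : ℤ) + 1) ^ 2 * FF k (M + 1)
      - ∑ j ∈ Finset.range (2 * M + 2 + 1),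
          (-1 : ℤ) ^ j * ((j : ℤ) * (2 * (M : ℤ) + 2 - j) * ((2 * M + 2).choose j : ℤ))
            * (((M : ℤ) + 1) - j) ^ (2 * k) := by
    rw [FF, FF, hrange, Finset.mul_sum, ← Finset.sum_sub_distrib]
    refine Finset.sum_congr rfl ?_
    intro j hj
    have e2 : 2 * (M + 1) = 2 * M + 2 := by omega
    rw [e2, show 2 * (k + 1) = 2 * k + 2 by ring, pow_add]
    push_cast
    ring
  rw [hsplit]
  have hS : ∑ j ∈ Finset.range (2 * M + 2 + 1),
      (-1 : ℤ) ^ j * ((j : ℤ) * (2 * (M : ℤ) + 2 - j) * ((2 * M + 2).choose j : ℤ))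
        * (((M : ℤ) + 1) - j) ^ (2 * k)
      = - ((2 * (M : ℤ) + 2) * (2 * (M : ℤ) + 1) * FF k M) := by
    rw [Finset.sum_range_succ']
    have hlast : ∀ i ∈ Finset.range (2 * M + 2),
        (-1 : ℤ) ^ (i + 1) * (((i + 1 : ℕ) : ℤ) * (2 * (M : ℤ) + 2 - ((i + 1 : ℕ) : ℤ))
            * ((2 * M + 2).choose (i + 1) : ℤ)) * (((M : ℤ) + 1) - ((i + 1 : ℕ) : ℤ)) ^ (2 * k)
        = - ((2 * (M : ℤ) + 2) * (2 * (M : ℤ) + 1) *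
            ((-1 : ℤ) ^ i * (((2 * M).choose i : ℕ) : ℤ) * ((M : ℤ) - i) ^ (2 * k))) := by
      intro i hi
      have hi' : i ≤ 2 * M + 1 := by
        have := Finset.mem_range.mp hi; omega
      have hk1 : ((i + 1 : ℕ) : ℤ) * (2 * (M : ℤ) + 2 - ((i + 1 : ℕ) : ℤ))
            * ((2 * M + 2).choose (i + 1) : ℤ)
          = (((i + 1) * (2 * M + 1 - i) * (2 * M + 2).choose (i + 1) : ℕ) : ℤ) := by
        push_cast [Nat.cast_sub hi']
        ring
      rw [hk1, key M i]
      push_cast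
      ring
    rw [Finset.sum_congr rfl hlast]
    have hz : (2 * M).choose (2 * M + 1) = 0 := Nat.choose_eq_zero_of_lt (by omega)
    have hFF : FF k M = ∑ i ∈ Finset.range (2 * M + 2),
        (-1 : ℤ) ^ i * (((2 * M).choose i : ℕ) : ℤ) * ((M : ℤ) - i) ^ (2 * k) := by
      rw [show (2 : ℕ) * M + 2 = 2 * M + 1 + 1 from rfl, Finset.sum_range_succ, hz, FF]
      simp
    rw [hFF, Finset.mul_sum]
    rw [← Finset.sum_neg_distrib]
    simp only [Nat.cast_zero, zero_mul, mul_zero, pow_zero, add_zero]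
  rw [hS]; ring

lemma Frec (k m : ℕ) (hm : 1 ≤ m) :
    FF (k + 1) m = (m : ℤ) ^ 2 * FF k m
      + (2 * (m : ℤ)) * (2 * (m : ℤ) - 1) * FF k (m - 1) := by
  obtain ⟨M, rfl⟩ : ∃ M, m = M + 1 := ⟨m - 1, by omega⟩
  have := FrecM k M
  simp only [Nat.add_sub_cancel]
  push_cast
  push_cast at this
  linarith [this]

lemma FFzero0 (k : ℕ) (hk : 1 ≤ k) : FF k 0 = 0 := by
  simp [FF, zero_pow (show 2 * k ≠ 0 by omega)]

lemma FFvanish : ∀ k m : ℕ, k + 1 ≤ m → FF k m = 0 := by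
  intro k
  induction k with
  | zero =>
    intro m hm
    have h := Int.alternating_sum_range_choose (n := 2 * m)
    rw [if_neg (show 2 * m ≠ 0 by omega)] at h
    rw [FF]
    simpa using h
  | succ k ih =>
    intro m hm
    rw [Frec k m (by omega), ih m (by omega), ih (m - 1) (by omega)]
    ring

lemma FR (k m : ℕ) (hk : 1 ≤ k) : FF k m = 2 * R k m := by
  set t : ℕ → ℤ := fun j => (-1 : ℤ) ^ j * ((2 * m).choose j : ℤ) * ((m : ℤ) - j) ^ (2 * k)
    with ht
  have htm : t m = 0 := by
    simp [ht, zero_pow (show 2 * k ≠ 0 by omega)]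
  have hsplit : FF k m = (∑ j ∈ Finset.range (m + 1), t j) + ∑ i ∈ Finset.range m, t (m + 1 + i) := by
    rw [FF, show 2 * m + 1 = (m + 1) + m by omega, Finset.sum_range_add]
  have hrefl : ∑ i ∈ Finset.range m, t (m + 1 + i) = ∑ i ∈ Finset.range m, t i := by
    rw [← Finset.sum_range_reflect (fun i => t (m + 1 + i)) m]
    refine Finset.sum_congr rfl ?_
    intro i hi
    have hi' : i < m := Finset.mem_range.mp hi
    have e1 : m + 1 + (m - 1 - i) = 2 * m - i := by omega
    rw [e1, ht]
    simp only
    have hs : (-1 : ℤ) ^ (2 * m - i) = (-1 : ℤ) ^ i := by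
      rw [show 2 * m - i = i + 2 * (m - i) by omega, pow_add, pow_mul]
      simp
    have hch : (2 * m).choose (2 * m - i) = (2 * m).choose i :=
      Nat.choose_symm (by omega)
    have hp : ((m : ℤ) - ((2 * m - i : ℕ) : ℤ)) ^ (2 * k) = ((m : ℤ) - i) ^ (2 * k) := by
      rw [show ((2 * m - i : ℕ) : ℤ) = 2 * (m : ℤ) - i by push_cast [Nat.cast_sub (by omega : i ≤ 2*m)]; ring]
      rw [show (m : ℤ) - (2 * (m : ℤ) - i) = -((m : ℤ) - i) by ring]
      exact Even.neg_pow (even_two_mul k) _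
    rw [hs, hch, hp]
  have hfront : ∑ j ∈ Finset.range (m + 1), t j = ∑ j ∈ Finset.range m, t j := by
    rw [Finset.sum_range_succ, htm, add_zero]
  have hR : R k m = ∑ j ∈ Finset.range m, t j := by
    rw [R, Finset.sum_range_succ]
    have hz : (((m - m) ^ (2 * k) : ℕ) : ℤ) = 0 := by
      simp [zero_pow (show 2 * k ≠ 0 by omega)]
    rw [hz, mul_zero, add_zero]
    refine Finset.sum_congr rfl ?_
    intro j hj
    have hj' : j ≤ m := le_of_lt (Finset.mem_range.mp hj)
    rw [ht]
    simp only
    push_cast [Nat.cast_sub hj']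
    ring
  rw [hsplit, hrefl, hfront, hR]
  ring

lemma aux2 (n : ℕ) : (n + 1).choose 2 + n.choose 2 = n ^ 2 := by
  induction n with
  | zero => simp
  | succ n ih =>
    have h1 : (n + 1 + 1).choose 2 = (n + 1).choose 1 + (n + 1).choose 2 :=
      Nat.choose_succ_succ _ _
    have h2 : (n + 1).choose 2 = n.choose 1 + n.choose 2 := Nat.choose_succ_succ _ _
    simp only [Nat.choose_one_right] at h1 h2
    have e : (n + 1) ^ 2 = n ^ 2 + 2 * n + 1 := by ring
    rw [e]
    omega

lemma gbase (n : ℕ) : gg 1 n = (n : ℤ) ^ 2 := by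
  have h := aux2 n
  simp only [gg, show 2 * 1 = 2 from rfl, Nat.add_sub_cancel]
  exact_mod_cast congrArg (Nat.cast : ℕ → ℤ) h

/-- the shifted summand in the inductive step. -/
def psi (k n t : ℕ) : ℤ := (2 * (t : ℤ)) * (2 * (t : ℤ) - 1) * FF k (t - 1) * gg t n

lemma shiftIcc (f : ℕ → ℤ) (h0 : f 1 = 0) (k : ℕ) :
    ∑ m ∈ Finset.Icc 1 (k + 1), f m = ∑ m ∈ Finset.Icc 1 k, f (m + 1) := by
  induction k with
  | zero => simp [h0]
  | succ k ih =>
    rw [Finset.sum_Icc_succ_top (by omega), ih,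
      ← Finset.sum_Icc_succ_top (by omega) (fun m => f (m + 1))]

lemma keyA (k : ℕ) (hk : 1 ≤ k) (n : ℕ) :
    2 * (n : ℤ) ^ (2 * k) = ∑ m ∈ Finset.Icc 1 k, FF k m * gg m n := by
  induction k, hk using Nat.le_induction with
  | base =>
    rw [show Finset.Icc 1 1 = {1} from rfl, Finset.sum_singleton, gbase]
    have hFF11 : FF 1 1 = 2 := by
      norm_num [FF, Finset.sum_range_succ]
    rw [hFF11]
  | succ k hk ih =>
    have step1 : 2 * (n : ℤ) ^ (2 * (k + 1))
        = ∑ m ∈ Finset.Icc 1 k, FF k m * ((n : ℤ) ^ 2 * gg m n) := by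
      calc 2 * (n : ℤ) ^ (2 * (k + 1)) = (n : ℤ) ^ 2 * (2 * (n : ℤ) ^ (2 * k)) := by ring
        _ = (n : ℤ) ^ 2 * ∑ m ∈ Finset.Icc 1 k, FF k m * gg m n := by rw [ih]
        _ = ∑ m ∈ Finset.Icc 1 k, FF k m * ((n : ℤ) ^ 2 * gg m n) := by
            rw [Finset.mul_sum]
            exact Finset.sum_congr rfl fun m _ => by ring
    have step2 : ∀ m ∈ Finset.Icc 1 k,
        FF k m * ((n : ℤ) ^ 2 * gg m n)
          = psi k n (m + 1) + (m : ℤ) ^ 2 * FF k m * gg m n := by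
      intro m hm
      have hm1 : 1 ≤ m := (Finset.mem_Icc.mp hm).1
      have hg := grec n m hm1
      simp only [psi, Nat.add_sub_cancel]
      push_cast
      linear_combination FF k m * hg
    have step3 : 2 * (n : ℤ) ^ (2 * (k + 1))
        = (∑ m ∈ Finset.Icc 1 k, psi k n (m + 1))
          + ∑ m ∈ Finset.Icc 1 k, (m : ℤ) ^ 2 * FF k m * gg m n := by
      rw [step1, Finset.sum_congr rfl step2, Finset.sum_add_distrib]
    have hpsi1 : psi k n 1 = 0 := by
      simp [psi, FFzero0 k hk]
    rw [step3, ← shiftIcc (psi k n) hpsi1 k]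
    rw [Finset.sum_Icc_succ_top (show (1:ℕ) ≤ k + 1 by omega) (psi k n)]
    rw [Finset.sum_Icc_succ_top (show (1:ℕ) ≤ k + 1 by omega)
        (fun m => FF (k + 1) m * gg m n)]
    have htop : FF (k + 1) (k + 1) * gg (k + 1) n = psi k n (k + 1) := by
      have h := Frec k (k + 1) (by omega)
      rw [h, FFvanish k (k + 1) (by omega)]
      simp only [psi, Nat.add_sub_cancel]
      push_cast
      ring
    rw [htop]
    have hmid : ∀ m ∈ Finset.Icc 1 k,
        FF (k + 1) m * gg m n = psi k n m + (m : ℤ) ^ 2 * FF k m * gg m n := by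
      intro m hm
      have hm1 : 1 ≤ m := (Finset.mem_Icc.mp hm).1
      rw [Frec k m hm1, psi]
      ring
    rw [Finset.sum_congr rfl hmid, Finset.sum_add_distrib]
    ring

lemma Om_succ (k n : ℕ) : Om k (n + 1) = (((n + 1) ^ k : ℕ) : ℤ) - Om k n := by
  rw [Om, Om, Finset.sum_Icc_succ_top (show (1:ℕ) ≤ n + 1 by omega)]
  rw [Nat.sub_self, pow_zero, one_mul]
  have hterm : ∀ i ∈ Finset.Icc 1 n,
      (-1 : ℤ) ^ (n + 1 - i) * ((i ^ k : ℕ) : ℤ)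
        = -((-1 : ℤ) ^ (n - i) * ((i ^ k : ℕ) : ℤ)) := by
    intro i hi
    have hi1 : i ≤ n := (Finset.mem_Icc.mp hi).2
    rw [show n + 1 - i = (n - i) + 1 by omega, pow_succ]
    ring
  rw [Finset.sum_congr rfl hterm, Finset.sum_neg_distrib]
  ring

theorem stmt_9 (k n : ℕ) (hk : 1 ≤ k) (hn : 1 ≤ n) :
    Om (2 * k) n = ∑ m ∈ Finset.Icc 1 k, R k m * ((n + m).choose (2 * m) : ℤ) := by
  induction n, hn using Nat.le_induction with
  | base =>
    have hbase : Om (2 * k) 1 = 1 := by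
      simp [Om]
    rw [hbase]
    rw [Finset.sum_eq_single_of_mem 1 (Finset.mem_Icc.mpr ⟨le_refl 1, hk⟩)]
    · have hR1 : R k 1 = 1 := by
        have h2k : 2 * k ≠ 0 := by omega
        simp [R, Finset.sum_range_succ, Nat.zero_pow (show 0 < 2 * k by omega)]
        omega
      rw [hR1]
      norm_num
    · intro b hb hb1
      have hb2 : 2 ≤ b := by
        have := (Finset.mem_Icc.mp hb).1; omega
      have hz : (1 + b).choose (2 * b) = 0 := Nat.choose_eq_zero_of_lt (by omega)
      rw [hz]
      ring
  | succ n hn ih =>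
    have hA := keyA k hk (n + 1)
    have hg : ∀ m ∈ Finset.Icc 1 k, FF k m * gg m (n + 1)
        = 2 * (R k m * (((n + 1) + m).choose (2 * m) : ℤ))
          + 2 * (R k m * ((n + m).choose (2 * m) : ℤ)) := by
      intro m hm
      have hm1 : 1 ≤ m := (Finset.mem_Icc.mp hm).1
      rw [FR k m hk, gg, show n + 1 + m - 1 = n + m by omega]
      ring
    rw [Finset.sum_congr rfl hg, Finset.sum_add_distrib, ← Finset.mul_sum, ← Finset.mul_sum]
      at hA
    rw [Om_succ, ih]
    have hc : (((n + 1) ^ (2 * k) : ℕ) : ℤ) = ((n : ℤ) + 1) ^ (2 * k) := by push_cast; ring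
    rw [hc]
    push_cast at hA
    linarith [hA]
end

section
/- For every integer k ≥ 1 and every positive integer n, 2^(2k-1) · S_{2k-1}(n) = Σ_{m=1}^{k} Q_{k,m}(n) · C(n+m, 2m-1), where Q_{k,1}(n) = n^(2k-1) and, for 2 ≤ m ≤ k, Q_{k,m}(n) = 2 · Σ_{j=m}^{k} C(2k-1, 2j-2) · R(j-1, m-1) · n^(2k-2j+1). -/
/-- The polynomials `Q_{k,m}` evaluated at `n`:  `Q_{k,1}(n) = n^{2k-1}` and, for
`m ≥ 2`, `Q_{k,m}(n) = 2 ∑_{j=m}^k C(2k-1, 2j-2) R(j-1, m-1) n^{2k-2j+1}`. -/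
def Q (k m n : ℕ) : ℤ :=
  if m = 1 then ((n : ℤ)) ^ (2 * k - 1)
  else 2 * ∑ j ∈ Finset.Icc m k,
    ((2 * k - 1).choose (2 * j - 2) : ℤ) * R (j - 1) (m - 1) * (n : ℤ) ^ (2 * k - 2 * j + 1)

/-!
Writing `2i = n + (2i - n)` and expanding binomially turns `∑_{i ≤ n} (2i)^(2k-1)` into a
combination of the power sums of the symmetric progression `-n, -n + 2, …, n`, whose odd power
sums vanish. For any `f : ℤ → G`, the sum of `f` over the progression centred at `x` equals
`∑_m C(n+m+1, 2m+1) δ^{2m} f(x)`, where `δ^{2m} f(x) = Δ^{2m} f(x - m)` is the central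
difference: in terms of the shift `E`, both sides obey the Chebyshev recurrence
`U_{n+2} = (E + E⁻¹) U_{n+1} - U_n`. For `f(y) = y^(2e)` with `e ≥ 1` one has
`δ^{2m} f(0) = 2 R(e, m)`, which vanishes for `m > e`; collecting terms yields the `Q_{k,m}`.
-/

open Finset
open scoped fwdDiff

section IntervalSums

variable {M : Type*} [AddCommMonoid M]

lemma sum_Icc_add_one (f : ℕ → M) (a b : ℕ) :
    ∑ m ∈ Icc (a + 1) (b + 1), f m = ∑ m ∈ Icc a b, f (m + 1) := by
  rw [← map_add_right_Icc, sum_map]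
  rfl

lemma sum_Icc_one_add_one (f : ℕ → M) (K : ℕ) :
    ∑ m ∈ Icc 1 (K + 1), f m = f 1 + ∑ m ∈ Icc 1 K, f (m + 1) := by
  rw [Icc_eq_cons_Ioc (by omega), sum_cons, ← Icc_add_one_left_eq_Ioc, sum_Icc_add_one]

lemma sum_range_add_one_eq_add_sum_Icc (f : ℕ → M) (K : ℕ) :
    ∑ e ∈ range (K + 1), f e = f 0 + ∑ e ∈ Icc 1 K, f e := by
  rw [range_eq_Ico, sum_eq_sum_Ico_succ_bot (by omega), zero_add, Ico_add_one_right_eq_Icc]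

lemma sum_range_two_mul_eq_sum_add (f : ℕ → M) (K : ℕ) :
    ∑ t ∈ range (2 * K), f t = ∑ e ∈ range K, (f (2 * e) + f (2 * e + 1)) := by
  induction K with
  | zero => simp
  | succ K ih => rw [mul_add_one, sum_range_succ, sum_range_succ, sum_range_succ, ih, add_assoc]

lemma sum_range_two_mul_add_one_add_of_symm (a : ℕ → M) (m : ℕ)
    (h : ∀ j ≤ 2 * m, a (2 * m - j) = a j) :
    ∑ j ∈ range (2 * m + 1), a j + a m = 2 • ∑ j ∈ range (m + 1), a j := by
  have upper : ∑ j ∈ range m, a (m + 1 + j) = ∑ j ∈ range m, a j := by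
    rw [← sum_range_reflect]
    refine sum_congr rfl fun j hj ↦ ?_
    rw [mem_range] at hj
    rw [← h _ (by omega)]
    congr 1
    omega
  rw [show 2 * m + 1 = m + 1 + m by ring, sum_range_add, upper, sum_range_succ _ m, two_nsmul]
  abel

end IntervalSums

lemma neg_one_pow_two_mul_sub {α : Type*} [Ring α] {j m : ℕ} (h : j ≤ 2 * m) :
    (-1 : α) ^ (2 * m - j) = (-1) ^ j := by
  rw [neg_one_pow_eq_pow_mod_two, neg_one_pow_eq_pow_mod_two (n := j)]
  congr 1
  omega

lemma Nat.choose_add_two_add_choose (a b : ℕ) :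
    (a + 2).choose (b + 2) + a.choose (b + 2) = a.choose b + 2 * (a + 1).choose (b + 2) := by
  simp only [Nat.choose_succ_succ, Nat.succ_eq_add_one]
  ring

section CentralDifference

variable {G : Type*} [AddCommGroup G]

def stepTwoSum (f : ℤ → G) (x : ℤ) (n : ℕ) : G := ∑ i ∈ range (n + 1), f (x + (2 * i - n))

lemma fwdDiff_iter_two_apply_sub_one (f : ℤ → G) (y : ℤ) :
    (Δ_[1])^[2] f (y - 1) = f (y + 1) - 2 • f y + f (y - 1) := by
  simp only [Function.iterate_succ_apply, Function.iterate_zero_apply, fwdDiff, sub_add_cancel]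
  abel

lemma fwdDiff_iter_two_mul_comp_sub_one (f : ℤ → G) (m : ℕ) (x : ℤ) :
    (Δ_[1])^[2 * m] (fun y ↦ (Δ_[1])^[2] f (y - 1)) (x - m) =
      (Δ_[1])^[2 * (m + 1)] f (x - (m + 1 : ℕ)) := by
  simp_rw [sub_eq_add_neg, fwdDiff_iter_comp_add, mul_add, mul_one, Function.iterate_add_apply]
  push_cast
  ring_nf

lemma sum_range_choose_smul_of_lt (D : ℕ → G) {n N : ℕ} (h : n < N) :
    ∑ m ∈ range N, (n + m + 1).choose (2 * m + 1) • D m =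
      ∑ m ∈ range (n + 1), (n + m + 1).choose (2 * m + 1) • D m := by
  refine (sum_subset (range_subset_range.2 h) fun m _ hm ↦ ?_).symm
  rw [Nat.choose_eq_zero_of_lt (by simp at hm; omega), zero_smul]

lemma stepTwoSum_add_two (f : ℤ → G) (x : ℤ) (n : ℕ) :
    stepTwoSum f x (n + 2) =
      stepTwoSum (fun y ↦ (Δ_[1])^[2] f (y - 1)) x (n + 1) + 2 • stepTwoSum f x (n + 1) -
        stepTwoSum f x n := by
  have upper : ∑ i ∈ range (n + 1 + 1), f (x + (2 * i - (n + 1 : ℕ)) + 1) =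
      ∑ i ∈ range (n + 1), f (x + (2 * i - n)) + f (x + (n + 2 : ℕ)) := by
    rw [sum_range_succ]
    congr 1
    · exact sum_congr rfl fun i _ ↦ by push_cast; ring_nf
    · push_cast; ring_nf
  have lower : ∑ i ∈ range (n + 2 + 1), f (x + (2 * i - (n + 2 : ℕ))) =
      ∑ i ∈ range (n + 1 + 1), f (x + (2 * i - (n + 1 : ℕ)) - 1) + f (x + (n + 2 : ℕ)) := by
    rw [sum_range_succ]
    congr 1
    · exact sum_congr rfl fun i _ ↦ by push_cast; ring_nf
    · push_cast; ring_nf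
  simp only [stepTwoSum, fwdDiff_iter_two_apply_sub_one, sum_add_distrib, sum_sub_distrib,
    ← smul_sum]
  rw [upper, lower]
  abel

theorem stepTwoSum_eq_sum_choose_smul_fwdDiff_iter (f : ℤ → G) (x : ℤ) (n : ℕ) :
    stepTwoSum f x n =
      ∑ m ∈ range (n + 1), (n + m + 1).choose (2 * m + 1) • (Δ_[1])^[2 * m] f (x - m) := by
  induction n using Nat.twoStepInduction generalizing f x with
  | zero => simp [stepTwoSum]
  | one =>
    simp only [stepTwoSum, Nat.reduceAdd, Nat.cast_one, sum_range_succ, range_one, sum_singleton,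
      CharP.cast_eq_zero, mul_zero, zero_sub, ← sub_eq_add_neg, mul_one, Int.reduceSub, add_zero,
      zero_add, Nat.choose_succ_self_right, sub_zero, Function.iterate_zero, id_eq, Nat.choose_self,
      fwdDiff_iter_two_apply_sub_one, smul_add, one_smul]
    abel
  | more n ih ih' =>
    have coeff (m : ℕ) (X : G) : (n + 2 + (m + 1) + 1).choose (2 * (m + 1) + 1) • X =
        (n + 1 + m + 1).choose (2 * m + 1) • X +
          2 • (n + 1 + (m + 1) + 1).choose (2 * (m + 1) + 1) • X -
            (n + (m + 1) + 1).choose (2 * (m + 1) + 1) • X := by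
      have pascal := Nat.choose_add_two_add_choose (n + m + 2) (2 * m + 1)
      ring_nf at pascal
      rw [eq_sub_iff_add_eq, ← add_smul, ← mul_smul, ← add_smul]
      ring_nf
      rw [pascal]
    rw [stepTwoSum_add_two, ih' (fun y ↦ (Δ_[1])^[2] f (y - 1)), ih, ih']
    simp only [fwdDiff_iter_two_mul_comp_sub_one]
    rw [← sum_range_choose_smul_of_lt (fun m ↦ (Δ_[1])^[2 * m] f (x - m)) (N := n + 2 + 1)
        (by omega : n < n + 2 + 1),
      ← sum_range_choose_smul_of_lt (fun m ↦ (Δ_[1])^[2 * m] f (x - m)) (N := n + 2 + 1)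
        (by omega : n + 1 < n + 2 + 1)]
    simp only [sum_range_succ' _ (n + 2), coeff, sum_add_distrib, sum_sub_distrib, smul_add,
      smul_sum, show n + 1 + 1 = n + 2 from rfl, mul_zero, zero_add, Nat.choose_one_right]
    module

end CentralDifference

lemma two_mul_R_eq_sum_range {e : ℕ} (he : e ≠ 0) (m : ℕ) :
    2 * R e m =
      ∑ j ∈ range (2 * m + 1), (-1) ^ j * ((2 * m).choose j : ℤ) * ((m : ℤ) - j) ^ (2 * e) := by
  set a : ℕ → ℤ := fun j ↦ (-1) ^ j * ((2 * m).choose j : ℤ) * ((m : ℤ) - j) ^ (2 * e)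
  have symm (j : ℕ) (hj : j ≤ 2 * m) : a (2 * m - j) = a j := by
    simp only [a, neg_one_pow_two_mul_sub hj, Nat.choose_symm hj, Nat.cast_sub hj]
    rw [show (m : ℤ) - (↑(2 * m) - j) = -(m - j) by push_cast; ring, Even.neg_pow (even_two_mul e)]
  have half : R e m = ∑ j ∈ range (m + 1), a j := by
    refine sum_congr rfl fun j hj ↦ ?_
    rw [mem_range] at hj
    simp only [a, Nat.cast_pow, Nat.cast_sub (Nat.le_of_lt_succ hj)]
  have center : a m = 0 := by simp [a, he]
  have := sum_range_two_mul_add_one_add_of_symm a m symm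
  rw [center, add_zero, nsmul_eq_mul, Nat.cast_ofNat] at this
  rw [half, this]

lemma two_mul_R_eq_fwdDiff_iter {e : ℕ} (he : e ≠ 0) (m : ℕ) :
    2 * R e m = (Δ_[1])^[2 * m] (fun y : ℤ ↦ y ^ (2 * e)) (-m) := by
  rw [two_mul_R_eq_sum_range he, fwdDiff_iter_eq_sum_shift]
  refine sum_congr rfl fun j hj ↦ ?_
  rw [mem_range, Nat.lt_succ_iff] at hj
  rw [neg_one_pow_two_mul_sub hj, smul_eq_mul, nsmul_one, ← neg_sub, Even.neg_pow (even_two_mul e)]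
  ring_nf

lemma R_eq_zero_of_lt_s10 {e m : ℕ} (he : e ≠ 0) (h : e < m) : R e m = 0 := by
  have := two_mul_R_eq_fwdDiff_iter he m
  rw [fwdDiff_iter_pow_eq_zero_of_lt (by omega)] at this
  simpa using this

lemma R_zero_right_s10 {e : ℕ} (he : e ≠ 0) : R e 0 = 0 := by
  simp [R, he]

def symmPowSum (t n : ℕ) : ℤ := stepTwoSum (· ^ t) 0 n

lemma symmPowSum_zero (n : ℕ) : symmPowSum 0 n = n + 1 := by
  simp [symmPowSum, stepTwoSum]

lemma symmPowSum_two_mul_add_one (e n : ℕ) : symmPowSum (2 * e + 1) n = 0 := by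
  have reflect := sum_range_reflect (fun i ↦ (2 * i - n : ℤ) ^ (2 * e + 1)) (n + 1)
  have neg : ∑ j ∈ range (n + 1), (2 * ((n + 1 - 1 - j : ℕ) : ℤ) - n) ^ (2 * e + 1) =
      -∑ j ∈ range (n + 1), (2 * j - n : ℤ) ^ (2 * e + 1) := by
    rw [← sum_neg_distrib]
    refine sum_congr rfl fun j hj ↦ ?_
    rw [mem_range] at hj
    rw [← Odd.neg_pow (odd_two_mul_add_one e), Nat.cast_sub (by omega)]
    push_cast
    ring_nf
  rw [neg] at reflect
  simp only [symmPowSum, stepTwoSum, zero_add]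
  omega

lemma symmPowSum_two_mul {e : ℕ} (he : e ≠ 0) (n : ℕ) :
    symmPowSum (2 * e) n = 2 * ∑ m ∈ Icc 1 e, R e m * (n + m + 1).choose (2 * m + 1) := by
  rw [symmPowSum, stepTwoSum_eq_sum_choose_smul_fwdDiff_iter]
  simp only [zero_sub, ← two_mul_R_eq_fwdDiff_iter he]
  rw [← sum_range_choose_smul_of_lt _ (by omega : n < n + e + 1), mul_sum]
  refine (sum_subset (fun m hm ↦ ?_) fun m _ hm ↦ ?_).symm.trans (sum_congr rfl fun m _ ↦ ?_)
  · simp only [mem_Icc, mem_range] at hm ⊢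
    omega
  · rcases Nat.eq_zero_or_pos m with rfl | hm0
    · simp [R_zero_right_s10 he]
    · rw [R_eq_zero_of_lt_s10 he (by simp at hm; omega)]
      simp
  · rw [nsmul_eq_mul]
    ring

lemma sum_range_two_mul_pow (N n : ℕ) :
    ∑ i ∈ range (n + 1), (2 * i : ℤ) ^ N =
      ∑ t ∈ range (N + 1), (N.choose t : ℤ) * (n : ℤ) ^ (N - t) * symmPowSum t n := by
  simp only [symmPowSum, stepTwoSum, zero_add, mul_sum]
  rw [sum_comm]
  refine sum_congr rfl fun i _ ↦ ?_
  rw [show (2 * i : ℤ) = (2 * i - n) + n by ring, add_pow]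
  exact sum_congr rfl fun t _ ↦ by ring

lemma sum_range_two_mul_pow_odd (K n : ℕ) :
    ∑ i ∈ range (n + 1), (2 * i : ℤ) ^ (2 * K + 1) =
      ∑ e ∈ range (K + 1),
        ((2 * K + 1).choose (2 * e) : ℤ) * (n : ℤ) ^ (2 * K + 1 - 2 * e) * symmPowSum (2 * e) n := by
  rw [sum_range_two_mul_pow, show 2 * K + 1 + 1 = 2 * (K + 1) by ring,
    sum_range_two_mul_eq_sum_add]
  simp only [symmPowSum_two_mul_add_one, mul_zero, add_zero]

lemma two_pow_mul_S {N : ℕ} (hN : N ≠ 0) (n : ℕ) :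
    (2 ^ N * S N n : ℤ) = ∑ i ∈ range (n + 1), (2 * i : ℤ) ^ N := by
  rw [S, ← Ico_add_one_right_eq_Icc, sum_Ico_eq_sum_range, add_tsub_cancel_right,
    sum_range_succ', Nat.cast_sum, mul_sum]
  simp [hN, mul_pow, add_comm]

lemma Q_one (k n : ℕ) : Q k 1 n = (n : ℤ) ^ (2 * k - 1) := if_pos rfl

lemma Q_add_one {m : ℕ} (hm : m ≠ 0) (K n : ℕ) :
    Q (K + 1) (m + 1) n =
      2 * ∑ e ∈ Icc m K,
        ((2 * K + 1).choose (2 * e) : ℤ) * R e m * (n : ℤ) ^ (2 * K + 1 - 2 * e) := by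
  rw [Q, if_neg (by omega), sum_Icc_add_one]
  congr 1
  refine sum_congr rfl fun e he ↦ ?_
  rw [mem_Icc] at he
  rw [show 2 * (K + 1) - 1 = 2 * K + 1 by omega, show 2 * (e + 1) - 2 = 2 * e by omega,
    show 2 * (K + 1) - 2 * (e + 1) + 1 = 2 * K + 1 - 2 * e by omega, Nat.add_sub_cancel,
    Nat.add_sub_cancel]

lemma sum_Q_mul_choose (K n : ℕ) :
    ∑ m ∈ Icc 1 (K + 1), Q (K + 1) m n * ((n + m).choose (2 * m - 1) : ℤ) =
      (n : ℤ) ^ (2 * K + 1) * (n + 1) +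
        ∑ e ∈ Icc 1 K, ((2 * K + 1).choose (2 * e) : ℤ) * (n : ℤ) ^ (2 * K + 1 - 2 * e) *
          (2 * ∑ m ∈ Icc 1 e, R e m * (n + m + 1).choose (2 * m + 1)) := by
  rw [sum_Icc_one_add_one, Q_one, show 2 * (K + 1) - 1 = 2 * K + 1 by omega]
  congr 1
  · simp
  · calc ∑ m ∈ Icc 1 K, Q (K + 1) (m + 1) n * ((n + (m + 1)).choose (2 * (m + 1) - 1) : ℤ)
        = ∑ m ∈ Icc 1 K, ∑ e ∈ Icc m K, ((2 * K + 1).choose (2 * e) : ℤ) *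
            (n : ℤ) ^ (2 * K + 1 - 2 * e) * (2 * (R e m * (n + m + 1).choose (2 * m + 1))) := by
          refine sum_congr rfl fun m hm ↦ ?_
          rw [Q_add_one (by simp at hm; omega), mul_sum, sum_mul,
            show n + (m + 1) = n + m + 1 by ring, show 2 * (m + 1) - 1 = 2 * m + 1 by omega]
          exact sum_congr rfl fun e _ ↦ by ring
      _ = ∑ e ∈ Icc 1 K, ∑ m ∈ Icc 1 e, ((2 * K + 1).choose (2 * e) : ℤ) *
            (n : ℤ) ^ (2 * K + 1 - 2 * e) * (2 * (R e m * (n + m + 1).choose (2 * m + 1))) :=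
          sum_comm' fun m e ↦ by simp only [mem_Icc]; omega
      _ = _ := by simp only [mul_sum]

theorem stmt_10_general (k n : ℕ) (hk : 1 ≤ k) :
    (2 ^ (2 * k - 1) * S (2 * k - 1) n : ℤ) =
      ∑ m ∈ Finset.Icc 1 k, Q k m n * ((n + m).choose (2 * m - 1) : ℤ) := by
  obtain ⟨K, rfl⟩ := Nat.exists_eq_add_of_le' hk
  rw [two_pow_mul_S (by omega), show 2 * (K + 1) - 1 = 2 * K + 1 by omega,
    sum_range_two_mul_pow_odd, sum_Q_mul_choose, sum_range_add_one_eq_add_sum_Icc]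
  congr 1
  · simp [symmPowSum_zero]
  · exact sum_congr rfl fun e he ↦ by rw [symmPowSum_two_mul (by simp at he; omega)]

theorem stmt_10 (k n : ℕ) (hk : 1 ≤ k) (hn : 1 ≤ n) :
    (2 ^ (2 * k - 1) * S (2 * k - 1) n : ℤ) =
      ∑ m ∈ Finset.Icc 1 k, Q k m n * ((n + m).choose (2 * m - 1) : ℤ) :=
  stmt_10_general k n hk
end

section
/- For every integer k ≥ 1 and every positive integer n, S_{2k+1}(n) = (S_1(n))^2 · Σ_{r=1}^{k} c_{k,r} · (S_1(n))^(r-1), as an identity of rational numbers, where c_{k,r} = Σ_{m=r}^{k} (2^(r+1) / ((2m+2)! · (m+1))) · R(k+1, m+1) · Ps_{m+1}^(r+1). -/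
/-- The (signed) Legendre-Stirling number of the first kind `Ps_m^{(r)}`: the
coefficient of `x^r` in `∏_{j=0}^{m-1} (x − j(j+1))`. -/
noncomputable def Ps (m r : ℕ) : ℤ :=
  (∏ j ∈ Finset.range m, (Polynomial.X - Polynomial.C ((j * (j + 1) : ℕ) : ℤ))).coeff r

/-- The Faulhaber coefficients `c_{k,r}`. -/
noncomputable def c (k r : ℕ) : ℚ :=
  ∑ m ∈ Finset.Icc r k,
    (2 ^ (r + 1) / ((Nat.factorial (2 * m + 2) : ℚ) * (m + 1 : ℚ))) *
      (R (k + 1) (m + 1) : ℚ) * (Ps (m + 1) (r + 1) : ℚ)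

open Finset Polynomial

def centralDiffPow (K m : ℕ) : ℤ :=
  ∑ j ∈ range (2 * m + 1), (-1 : ℤ) ^ j * (2 * m).choose j * ((m : ℤ) - j) ^ (2 * K)

theorem centralDiffPow_eq_fwdDiff_iter (K m : ℕ) :
    centralDiffPow K m = (fwdDiff 1)^[2 * m] (fun x : ℤ ↦ x ^ (2 * K)) (-m) := by
  rw [centralDiffPow, fwdDiff_iter_eq_sum_shift, ← sum_range_reflect]
  refine sum_congr rfl fun j hj ↦ ?_
  have hj : j ≤ 2 * m := Nat.lt_succ_iff.mp (mem_range.mp hj)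
  rw [show 2 * m + 1 - 1 - j = 2 * m - j by omega, Nat.choose_symm hj, smul_eq_mul,
    nsmul_eq_mul, Nat.cast_sub hj]
  push_cast
  ring

theorem centralDiffPow_eq_zero_of_lt {K m : ℕ} (h : K < m) : centralDiffPow K m = 0 := by
  rw [centralDiffPow_eq_fwdDiff_iter, fwdDiff_iter_pow_eq_zero_of_lt (by omega), Pi.zero_apply]

theorem centralDiffPow_eq_two_mul_R {K : ℕ} (hK : K ≠ 0) (m : ℕ) :
    centralDiffPow K m = 2 * R K m := by
  set f : ℕ → ℤ := fun j ↦ (-1 : ℤ) ^ j * (2 * m).choose j * ((m : ℤ) - j) ^ (2 * K)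
  have hf_symm : ∀ j ≤ 2 * m, f (2 * m - j) = f j := fun j hj ↦ by
    have hsign : (-1 : ℤ) ^ (2 * m - j) = (-1) ^ j := by
      rw [neg_one_pow_eq_pow_mod_two, neg_one_pow_eq_pow_mod_two (n := j)]
      congr 1
      omega
    simp only [f, hsign, Nat.choose_symm hj, Nat.cast_sub hj, Nat.cast_mul, Nat.cast_ofNat]
    rw [show (m : ℤ) - (2 * m - j) = -(m - j) by ring, (even_two_mul K).neg_pow]
  have hR : R K m = ∑ j ∈ range (m + 1), f j := sum_congr rfl fun j hj ↦ by
    have hj : j ≤ m := Nat.lt_succ_iff.mp (mem_range.mp hj)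
    simp [f, Nat.cast_sub hj]
  have hreflect : ∑ j ∈ range (m + 1), f (2 * m - j) = ∑ j ∈ range (m + 1), f (m + j) := by
    rw [← sum_range_reflect]
    exact sum_congr rfl fun j hj ↦ by
      congr 1; have := mem_range.mp hj; omega
  have hfm : f m = 0 := by simp [f, hK]
  calc centralDiffPow K m = ∑ j ∈ range m, f j + ∑ j ∈ range (m + 1), f (m + j) := by
        rw [centralDiffPow, show 2 * m + 1 = m + (m + 1) by ring, sum_range_add]
    _ = ∑ j ∈ range (m + 1), f j + ∑ j ∈ range (m + 1), f (2 * m - j) := by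
        rw [hreflect, sum_range_succ f m, hfm, add_zero]
    _ = 2 * R K m := by
        rw [hR, sum_congr rfl fun j hj ↦ hf_symm j (by have := mem_range.mp hj; omega)]
        ring

theorem choose_add_two_mul_eq {n i : ℕ} (hi : i ≤ n) :
    ((n + 2).choose (i + 1) : ℤ) * (i + 1) * ((n : ℤ) + 1 - i) =
      (n + 2) * (n + 1) * n.choose i := by
  have h₁ : ((n + 2).choose (i + 1) : ℤ) * (i + 1) = (n + 2) * (n + 1).choose i := by
    exact_mod_cast (Nat.add_one_mul_choose_eq (n + 1) i).symm
  have h₂ : ((n + 1).choose i : ℤ) * ((n : ℤ) + 1 - i) = n.choose i * (n + 1) := by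
    have h := congrArg (Nat.cast : ℕ → ℤ) (Nat.choose_mul_succ_eq n i)
    push_cast [show i ≤ n + 1 by omega] at h
    exact h.symm
  rw [h₁, mul_assoc, h₂]
  ring

theorem centralDiffPow_succ_succ (K m : ℕ) :
    centralDiffPow (K + 1) (m + 1) =
      (m + 1) ^ 2 * centralDiffPow K (m + 1) + (2 * m + 2) * (2 * m + 1) * centralDiffPow K m := by
  set g : ℕ → ℤ := fun j ↦
    (-1 : ℤ) ^ j * (2 * m + 2).choose j * j * (2 * m + 2 - j) * ((m : ℤ) + 1 - j) ^ (2 * K)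
  have hdiff : centralDiffPow (K + 1) (m + 1) - (m + 1) ^ 2 * centralDiffPow K (m + 1) =
      -∑ j ∈ range (2 * m + 3), g j := by
    rw [centralDiffPow, centralDiffPow, show 2 * (m + 1) = 2 * m + 2 by ring, mul_sum,
      ← sum_sub_distrib, ← sum_neg_distrib]
    refine sum_congr rfl fun j _ ↦ ?_
    simp only [g]
    push_cast
    ring
  have hshift : ∑ j ∈ range (2 * m + 3), g j =
      -((2 * m + 2) * (2 * m + 1) * centralDiffPow K m) := by
    have hg : ∀ i ∈ range (2 * m + 1), g (i + 1) = -((2 * m + 2) * (2 * m + 1) *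
        ((-1 : ℤ) ^ i * (2 * m).choose i * ((m : ℤ) - i) ^ (2 * K))) :=
      fun i hi ↦ by
        have h := choose_add_two_mul_eq (Nat.lt_succ_iff.mp (mem_range.mp hi))
        push_cast at h
        simp only [g]
        push_cast
        linear_combination (-(-1 : ℤ) ^ i * ((m : ℤ) - i) ^ (2 * K)) * h
    rw [sum_range_succ, sum_range_succ', sum_congr rfl hg, sum_neg_distrib, ← mul_sum]
    simp [g, centralDiffPow]
  linear_combination hdiff - hshift

/-- The central factorial number `T(2K, 2m)`. -/
noncomputable def centralFactorial (K m : ℕ) : ℚ := centralDiffPow K m / (2 * m).factorial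

theorem centralFactorial_one_one : centralFactorial 1 1 = 1 := by
  simp [centralFactorial, centralDiffPow, sum_range_succ]

theorem centralFactorial_succ_zero (K : ℕ) : centralFactorial (K + 1) 0 = 0 := by
  simp [centralFactorial, centralDiffPow]

theorem centralFactorial_eq_zero_of_lt {K m : ℕ} (h : K < m) : centralFactorial K m = 0 := by
  simp [centralFactorial, centralDiffPow_eq_zero_of_lt h]

theorem centralFactorial_succ_succ (K m : ℕ) :
    centralFactorial (K + 1) (m + 1) =
      (m + 1) ^ 2 * centralFactorial K (m + 1) + centralFactorial K m := by
  have hfact : ((2 * (m + 1)).factorial : ℚ) = (2 * m + 2) * (2 * m + 1) * (2 * m).factorial := by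
    rw [show 2 * (m + 1) = 2 * m + 1 + 1 by ring, Nat.factorial_succ, Nat.factorial_succ]
    push_cast
    ring
  rw [centralFactorial, centralFactorial, centralFactorial, centralDiffPow_succ_succ, hfact]
  field_simp
  push_cast
  ring

theorem pow_eq_sum_centralFactorial_mul_prod {F : Type*} [Field F] [CharZero F] (x : F) (K : ℕ) :
    x ^ K = ∑ m ∈ range (K + 1),
      (centralFactorial (K + 1) (m + 1) : F) * ∏ j ∈ range m, (x - ((j : F) + 1) ^ 2) := by
  set P : ℕ → F := fun m ↦ ∏ j ∈ range m, (x - ((j : F) + 1) ^ 2)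
  have hxP : ∀ m, x * P m = P (m + 1) + ((m : F) + 1) ^ 2 * P m := fun m ↦ by
    simp only [P, prod_range_succ]
    ring
  induction K with
  | zero => simp [centralFactorial_one_one]
  | succ K ih =>
    simp only [centralFactorial_succ_succ (K + 1), Rat.cast_add, Rat.cast_mul, Rat.cast_pow,
      Rat.cast_natCast, Rat.cast_one, add_mul, sum_add_distrib]
    rw [sum_range_succ _ (K + 1), centralFactorial_eq_zero_of_lt (by omega : K + 1 < K + 2),
      sum_range_succ' _ (K + 1), centralFactorial_succ_zero, pow_succ', ih, mul_sum]
    simp only [Rat.cast_zero, mul_zero, zero_mul, add_zero, ← sum_add_distrib]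
    refine sum_congr rfl fun m _ ↦ ?_
    rw [mul_left_comm, hxP]
    ring

theorem fwdDiff_prod_mul_add_one_sub {A : Type*} [CommRing A] (m : ℕ) (y : A) :
    fwdDiff 1 (fun y : A ↦ ∏ j ∈ range (m + 1), (y * (y + 1) - j * (j + 1))) y =
      (2 * m + 2) * ((y + 1) * ∏ j ∈ range m, ((y + 1) ^ 2 - ((j : A) + 1) ^ 2)) := by
  have hlow : ∀ m : ℕ, ∏ j ∈ range (m + 1), (y * (y + 1) - j * (j + 1)) =
      (y - m) * (y + 1) * ∏ j ∈ range m, ((y + 1) ^ 2 - ((j : A) + 1) ^ 2) := fun m ↦ by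
    induction m with
    | zero => simp
    | succ m ih =>
      rw [prod_range_succ, ih, prod_range_succ]
      push_cast
      ring
  have hhigh : ∀ m : ℕ, ∏ j ∈ range (m + 1), ((y + 1) * (y + 1 + 1) - j * (j + 1)) =
      (y + 1) * (y + m + 2) * ∏ j ∈ range m, ((y + 1) ^ 2 - ((j : A) + 1) ^ 2) := fun m ↦ by
    induction m with
    | zero => simp; ring
    | succ m ih =>
      rw [prod_range_succ, ih, prod_range_succ]
      push_cast
      ring
  rw [fwdDiff, hlow, hhigh]
  ring

theorem mul_sum_Icc_mul_prod_sq_sub_sq {A : Type*} [CommRing A] (m n : ℕ) :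
    (2 * m + 2) * ∑ i ∈ Icc 1 n, ((i : A) * ∏ j ∈ range m, ((i : A) ^ 2 - ((j : A) + 1) ^ 2)) =
      ∏ j ∈ range (m + 1), ((n : A) * (n + 1) - j * (j + 1)) := by
  induction n with
  | zero => simp [prod_range_succ']
  | succ n ih =>
    rw [sum_Icc_succ_top (by omega), mul_add, ih, Nat.cast_succ,
      ← fwdDiff_prod_mul_add_one_sub, fwdDiff]
    ring

noncomputable def legendreStirlingPoly (m : ℕ) : ℤ[X] :=
  ∏ j ∈ range m, (X - C ((j * (j + 1) : ℕ) : ℤ))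

theorem Ps_eq_coeff (m r : ℕ) : Ps m r = (legendreStirlingPoly m).coeff r := rfl

theorem Ps_eq_zero_of_lt {m r : ℕ} (h : m < r) : Ps m r = 0 := by
  rw [Ps_eq_coeff]
  refine coeff_eq_zero_of_natDegree_lt ?_
  rwa [legendreStirlingPoly, natDegree_finsetProd_X_sub_C_eq_card, card_range]

theorem prod_sub_eq_sum_Ps_mul_pow {A : Type*} [CommRing A] (m : ℕ) (u : A) :
    ∏ j ∈ range m, (u - j * (j + 1)) = ∑ r ∈ range (m + 1), (Ps m r : A) * u ^ r := by
  have hdeg : (legendreStirlingPoly m).natDegree < m + 1 := by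
    rw [legendreStirlingPoly, natDegree_finsetProd_X_sub_C_eq_card, card_range]
    omega
  calc ∏ j ∈ range m, (u - j * (j + 1)) = aeval u (legendreStirlingPoly m) := by
        simp [legendreStirlingPoly]
    _ = ∑ r ∈ range (m + 1), (Ps m r : A) * u ^ r := by
        simp [aeval_eq_sum_range' hdeg, Ps_eq_coeff, zsmul_eq_mul]

theorem Ps_succ_zero (m : ℕ) : Ps (m + 1) 0 = 0 := by
  rw [Ps_eq_coeff, coeff_zero_eq_eval_zero, legendreStirlingPoly, eval_prod]
  exact prod_eq_zero (mem_range.mpr m.succ_pos) (by simp)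

theorem Ps_succ_one (m : ℕ) : Ps (m + 1) 1 = (m + 1) * ∏ j ∈ range m, (-((j : ℤ) + 1) ^ 2) := by
  induction m with
  | zero => simp [Ps]
  | succ m ih =>
    rw [Ps_eq_coeff, legendreStirlingPoly, prod_range_succ, coeff_mul_X_sub_C,
      ← legendreStirlingPoly, ← Ps_eq_coeff, ← Ps_eq_coeff, Ps_succ_zero, ih, prod_range_succ]
    push_cast
    ring

theorem sum_Icc_pow_odd_eq_sum_prod (k n : ℕ) :
    ∑ i ∈ Icc 1 n, (i : ℚ) ^ (2 * k + 1) =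
      ∑ m ∈ range (k + 1), centralFactorial (k + 1) (m + 1) / (2 * m + 2) *
        ∏ j ∈ range (m + 1), ((n : ℚ) * (n + 1) - j * (j + 1)) := by
  have hpow : ∀ i : ℕ, (i : ℚ) ^ (2 * k + 1) = ∑ m ∈ range (k + 1),
      centralFactorial (k + 1) (m + 1) * (i * ∏ j ∈ range m, ((i : ℚ) ^ 2 - ((j : ℚ) + 1) ^ 2)) :=
    fun i ↦ by
      rw [pow_succ', pow_mul, pow_eq_sum_centralFactorial_mul_prod, mul_sum]
      exact sum_congr rfl fun m _ ↦ by rw [Rat.cast_id, mul_left_comm]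
  simp_rw [hpow]
  rw [sum_comm]
  refine sum_congr rfl fun m _ ↦ ?_
  rw [← mul_sum, ← mul_sum_Icc_mul_prod_sq_sub_sq]
  field_simp

noncomputable def oddPowerCoeff (k r : ℕ) : ℚ :=
  ∑ m ∈ range (k + 1), centralFactorial (k + 1) (m + 1) / (2 * m + 2) * Ps (m + 1) r

theorem cast_S_odd_eq_sum (k n : ℕ) :
    (S (2 * k + 1) n : ℚ) = ∑ r ∈ range (k + 2), oddPowerCoeff k r * ((n : ℚ) * (n + 1)) ^ r := by
  have hPs : ∀ m ∈ range (k + 1), ∏ j ∈ range (m + 1), ((n : ℚ) * (n + 1) - j * (j + 1)) =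
      ∑ r ∈ range (k + 2), (Ps (m + 1) r : ℚ) * ((n : ℚ) * (n + 1)) ^ r := fun m hm ↦ by
    rw [prod_sub_eq_sum_Ps_mul_pow]
    refine sum_subset (range_subset_range.mpr (by have := mem_range.mp hm; omega))
      fun r _ hr ↦ ?_
    rw [Ps_eq_zero_of_lt (by simpa using hr), Int.cast_zero, zero_mul]
  rw [S, Nat.cast_sum, sum_congr rfl fun i _ ↦ Nat.cast_pow i _, sum_Icc_pow_odd_eq_sum_prod,
    sum_congr rfl fun m hm ↦ by rw [hPs m hm]]
  simp only [mul_sum]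
  rw [sum_comm]
  simp only [oddPowerCoeff, sum_mul, mul_assoc]

theorem oddPowerCoeff_zero (k : ℕ) : oddPowerCoeff k 0 = 0 := by
  simp [oddPowerCoeff, Ps_succ_zero]

theorem oddPowerCoeff_one {k : ℕ} (hk : k ≠ 0) : oddPowerCoeff k 1 = 0 := by
  have h := pow_eq_sum_centralFactorial_mul_prod (0 : ℚ) k
  simp only [zero_pow hk, zero_sub, Rat.cast_id] at h
  rw [oddPowerCoeff, ← mul_eq_zero_of_right (1 / 2 : ℚ) h.symm, mul_sum]
  refine sum_congr rfl fun m _ ↦ ?_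
  rw [Ps_succ_one]
  field_simp
  push_cast
  ring

theorem c_eq_oddPowerCoeff (k r : ℕ) : c k r = 2 ^ (r + 1) * oddPowerCoeff k (r + 1) := by
  rw [c, oddPowerCoeff, mul_sum]
  refine sum_subset_zero_on_sdiff (fun m hm ↦ ?_) (fun m hm ↦ ?_) (fun m _ ↦ ?_)
  · simp only [mem_Icc, mem_range] at hm ⊢; omega
  · simp only [mem_sdiff, mem_Icc, mem_range] at hm
    rw [Ps_eq_zero_of_lt (by omega), Int.cast_zero, mul_zero, mul_zero]
  · rw [centralFactorial, centralDiffPow_eq_two_mul_R (Nat.succ_ne_zero k),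
      show 2 * (m + 1) = 2 * m + 2 by ring]
    field_simp
    push_cast
    ring

theorem two_mul_cast_S_one (n : ℕ) : 2 * (S 1 n : ℚ) = n * (n + 1) := by
  induction n with
  | zero => simp [S]
  | succ n ih =>
    rw [S, sum_Icc_succ_top (by omega), ← S]
    push_cast
    linear_combination ih

theorem stmt_13_general (k n : ℕ) (hk : 1 ≤ k) :
    (S (2 * k + 1) n : ℚ) =
      (S 1 n : ℚ) ^ 2 * ∑ r ∈ Finset.Icc 1 k, c k r * (S 1 n : ℚ) ^ (r - 1) := by
  rw [cast_S_odd_eq_sum, ← two_mul_cast_S_one, sum_range_succ', sum_range_succ',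
    oddPowerCoeff_zero, oddPowerCoeff_one (by omega), ← Ico_add_one_right_eq_Icc,
    sum_Ico_eq_sum_range, add_tsub_cancel_right, mul_sum]
  simp only [zero_mul, add_zero]
  refine sum_congr rfl fun r _ ↦ ?_
  rw [c_eq_oddPowerCoeff, add_tsub_cancel_left, add_comm 1 r]
  ring

theorem stmt_13 (k n : ℕ) (hk : 1 ≤ k) (hn : 1 ≤ n) :
    (S (2 * k + 1) n : ℚ) =
      (S 1 n : ℚ) ^ 2 * ∑ r ∈ Finset.Icc 1 k, c k r * (S 1 n : ℚ) ^ (r - 1) :=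
  stmt_13_general k n hk
end
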